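/- If one local function is replaced, the two constrained minimizers x⁽¹⁾ and x⁽²⁾ satisfy ‖x⁽²⁾ − x⁽¹⁾‖² ≤ 4nκ(1 + 1/√κ + |b|/n)². -/

import Mathlib

/-!
Each minimizer stays close to the vector `m` of minimizers of the local functions. Strong
convexity gives `α/2 ‖x − m‖² ≤ ∑ gᵢ(xᵢ) − ∑ gᵢ(mᵢ)`; minimality of `x` allows replacing `x` by the
balanced point `(b/n, …, b/n)`, where `β`-smoothness bounds the gap by
`β/2 ‖b/n − m‖² ≤ β/2 · n (1 + |b|/n)²`. As `‖m‖ ≤ √n`, the triangle inequality through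
`m⁽²⁾, 0, m⁽¹⁾` bounds `‖x⁽²⁾ − x⁽¹⁾‖` by `2√(κ n) (1 + |b|/n) + 2√n`.
-/

open Set

theorem ConvexOn.add_mul_sub_le_of_hasDerivAt {S : Set ℝ} {f : ℝ → ℝ} {f' x y : ℝ}
    (hf : ConvexOn ℝ S f) (hx : x ∈ S) (hy : y ∈ S) (hf' : HasDerivAt f f' x) :
    f x + f' * (y - x) ≤ f y := by
  rcases lt_trichotomy x y with hxy | rfl | hyx
  · have := hf.le_slope_of_hasDerivAt hx hy hxy hf'
    rw [slope_def_field, le_div_iff₀ (sub_pos.mpr hxy)] at this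
    linarith
  · simp
  · have := hf.slope_le_of_hasDerivAt hy hx hyx hf'
    rw [slope_def_field, div_le_iff₀ (sub_pos.mpr hyx)] at this
    linarith

theorem hasDerivAt_half_mul_sq (c t : ℝ) : HasDerivAt (fun t => c / 2 * t ^ 2) (c * t) t :=
  ((hasDerivAt_pow 2 t).const_mul (c / 2)).congr_deriv (by push_cast; ring)

theorem add_mul_sub_add_sq_le_of_convexOn_sub_sq {g : ℝ → ℝ} {α g' m : ℝ}
    (hc : ConvexOn ℝ univ fun t => g t - α / 2 * t ^ 2) (hg : HasDerivAt g g' m) (y : ℝ) :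
    g m + g' * (y - m) + α / 2 * (y - m) ^ 2 ≤ g y := by
  have := hc.add_mul_sub_le_of_hasDerivAt (mem_univ m) (mem_univ y)
    (hg.sub (hasDerivAt_half_mul_sq α m))
  linarith

theorem le_add_mul_sub_add_sq_of_abs_deriv_sub_le {g : ℝ → ℝ} {β m : ℝ}
    (hd : Differentiable ℝ g) (hs : ∀ s t, |deriv g s - deriv g t| ≤ β * |s - t|) (y : ℝ) :
    g y ≤ g m + deriv g m * (y - m) + β / 2 * (y - m) ^ 2 := by
  set q : ℝ → ℝ := fun t => β / 2 * t ^ 2 - g t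
  have hq : ∀ t, HasDerivAt q (β * t - deriv g t) t := fun t =>
    (hasDerivAt_half_mul_sq β t).sub (hd t).hasDerivAt
  have hq_mono : Monotone (deriv q) := by
    intro s t hst
    have := (abs_le.mp (hs t s)).2
    rw [abs_of_nonneg (sub_nonneg.mpr hst)] at this
    simp only [(hq _).deriv]
    linarith
  have hq_conv : ConvexOn ℝ univ q :=
    hq_mono.convexOn_univ_of_deriv fun t => (hq t).differentiableAt
  have := hq_conv.add_mul_sub_le_of_hasDerivAt (mem_univ m) (mem_univ y) (hq m)
  simp only [q] at this
  linarith

section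
variable {ι : Type*} [Fintype ι]

theorem sum_sq_sub_le_of_sum_le {α β : ℝ} {g : ι → ℝ → ℝ} {x y m : ι → ℝ} (hα : 0 < α)
    (hd : ∀ i, Differentiable ℝ (g i))
    (hc : ∀ i, ConvexOn ℝ univ fun t => g i t - α / 2 * t ^ 2)
    (hs : ∀ i s t, |deriv (g i) s - deriv (g i) t| ≤ β * |s - t|)
    (hm : ∀ i, IsMinOn (g i) univ (m i)) (hxy : ∑ i, g i (x i) ≤ ∑ i, g i (y i)) :
    ∑ i, (x i - m i) ^ 2 ≤ β / α * ∑ i, (y i - m i) ^ 2 := by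
  have hcrit : ∀ i, deriv (g i) (m i) = 0 := fun i =>
    ((hm i).isLocalMin Filter.univ_mem).deriv_eq_zero
  have hlow : ∀ i, g i (m i) + α / 2 * (x i - m i) ^ 2 ≤ g i (x i) := fun i => by
    simpa only [hcrit i, zero_mul, add_zero] using
      add_mul_sub_add_sq_le_of_convexOn_sub_sq (hc i) (hd i (m i)).hasDerivAt (x i)
  have hup : ∀ i, g i (y i) ≤ g i (m i) + β / 2 * (y i - m i) ^ 2 := fun i => by
    simpa only [hcrit i, zero_mul, add_zero] using
      le_add_mul_sub_add_sq_of_abs_deriv_sub_le (hd i) (hs i) (m := m i) (y i)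
  have hsum : α / 2 * ∑ i, (x i - m i) ^ 2 ≤ β / 2 * ∑ i, (y i - m i) ^ 2 := by
    have h₁ : ∑ i, (g i (m i) + α / 2 * (x i - m i) ^ 2) ≤ ∑ i, g i (x i) :=
      Finset.sum_le_sum fun i _ => hlow i
    have h₂ : ∑ i, g i (y i) ≤ ∑ i, (g i (m i) + β / 2 * (y i - m i) ^ 2) :=
      Finset.sum_le_sum fun i _ => hup i
    simp only [Finset.sum_add_distrib, ← Finset.mul_sum] at h₁ h₂
    linarith
  rw [div_mul_eq_mul_div, le_div_iff₀ hα]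
  linarith

theorem sum_sq_sub_le_card_mul {m : ι → ℝ} (hm : ∀ i, m i ∈ Icc (-1 : ℝ) 1) (c : ℝ) :
    ∑ i, (c - m i) ^ 2 ≤ Fintype.card ι * (1 + |c|) ^ 2 := by
  have h : ∀ i, (c - m i) ^ 2 ≤ (1 + |c|) ^ 2 := fun i => by
    obtain ⟨h₁, h₂⟩ := hm i
    rw [sq_le_sq, abs_of_nonneg (by positivity : (0 : ℝ) ≤ 1 + |c|)]
    exact abs_le.mpr ⟨by linarith [neg_abs_le c], by linarith [le_abs_self c]⟩
  calc ∑ i, (c - m i) ^ 2 ≤ ∑ _i : ι, (1 + |c|) ^ 2 := Finset.sum_le_sum fun i _ => h i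
    _ = Fintype.card ι * (1 + |c|) ^ 2 := by simp

theorem sum_sq_le_card {m : ι → ℝ} (hm : ∀ i, m i ∈ Icc (-1 : ℝ) 1) :
    ∑ i, m i ^ 2 ≤ Fintype.card ι := by
  simpa using sum_sq_sub_le_card_mul hm 0

theorem sum_sq_sub_le_of_sum_sq_sub_le {x₁ x₂ m₁ m₂ : ι → ℝ} {A B : ℝ}
    (hx₁ : ∑ i, (x₁ i - m₁ i) ^ 2 ≤ A) (hx₂ : ∑ i, (x₂ i - m₂ i) ^ 2 ≤ A)
    (hm₁ : ∑ i, m₁ i ^ 2 ≤ B) (hm₂ : ∑ i, m₂ i ^ 2 ≤ B) :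
    ∑ i, (x₂ i - x₁ i) ^ 2 ≤ (2 * √A + 2 * √B) ^ 2 := by
  let e : (ι → ℝ) → EuclideanSpace ℝ ι := WithLp.toLp 2
  have norm_sq : ∀ v, ‖e v‖ ^ 2 = ∑ i, v i ^ 2 := fun v => EuclideanSpace.real_norm_sq_eq _
  have norm_le : ∀ v C, ∑ i, v i ^ 2 ≤ C → ‖e v‖ ≤ √C := fun v C h =>
    Real.le_sqrt_of_sq_le (norm_sq v ▸ h)
  have hsub : ∀ u v, e u - e v = e (u - v) := fun u v => (WithLp.toLp_sub 2 u v).symm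
  have htri : ‖e x₂ - e x₁‖ ≤ 2 * √A + 2 * √B :=
    calc ‖e x₂ - e x₁‖ = ‖(e x₂ - e m₂) + e m₂ - e m₁ - (e x₁ - e m₁)‖ := by congr 1; abel
      _ ≤ ‖e x₂ - e m₂‖ + ‖e m₂‖ + ‖e m₁‖ + ‖e x₁ - e m₁‖ := by
        have h₁ := norm_sub_le (e x₂ - e m₂ + e m₂ - e m₁) (e x₁ - e m₁)
        have h₂ := norm_sub_le (e x₂ - e m₂ + e m₂) (e m₁)
        have h₃ := norm_add_le (e x₂ - e m₂) (e m₂)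
        linarith
      _ ≤ √A + √B + √B + √A := by
        rw [hsub, hsub]
        gcongr <;> apply norm_le <;> simpa
      _ = 2 * √A + 2 * √B := by ring
  simpa only [hsub, norm_sq, Pi.sub_apply] using pow_le_pow_left₀ (norm_nonneg _) htri 2

end

theorem two_mul_sqrt_add_two_mul_sqrt_sq {κ n c : ℝ} (hκ : 0 < κ) (hn : 0 ≤ n) (hc : 0 ≤ 1 + c) :
    (2 * √(κ * (n * (1 + c) ^ 2)) + 2 * √n) ^ 2 = 4 * n * κ * (1 + 1 / √κ + c) ^ 2 := by
  have hκ' : √κ ≠ 0 := (Real.sqrt_pos.mpr hκ).ne'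
  rw [Real.sqrt_mul hκ.le, Real.sqrt_mul hn, Real.sqrt_sq hc]
  calc (2 * (√κ * (√n * (1 + c))) + 2 * √n) ^ 2
      = 4 * √n ^ 2 * √κ ^ 2 * (1 + 1 / √κ + c) ^ 2 := by field_simp; ring
    _ = 4 * n * κ * (1 + 1 / √κ + c) ^ 2 := by rw [Real.sq_sqrt hn, Real.sq_sqrt hκ.le]

theorem minimizer_shift_bound_general (n : ℕ) (hn : 1 ≤ n) (α β b : ℝ)
    (hα : 0 < α) (hαβ : α ≤ β)
    (g₁ g₂ : Fin n → ℝ → ℝ)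
    (hdiff : ∀ i x, DifferentiableAt ℝ (g₁ i) x ∧ DifferentiableAt ℝ (g₂ i) x)
    (hconv : ∀ i, ConvexOn ℝ Set.univ (fun x => g₁ i x - α / 2 * x ^ 2) ∧
                  ConvexOn ℝ Set.univ (fun x => g₂ i x - α / 2 * x ^ 2))
    (hsmooth : ∀ i x y, |deriv (g₁ i) x - deriv (g₁ i) y| ≤ β * |x - y| ∧
                        |deriv (g₂ i) x - deriv (g₂ i) y| ≤ β * |x - y|)
    (hloc : ∀ i, (∃ m ∈ Set.Icc (-1:ℝ) 1, (∀ y, g₁ i m ≤ g₁ i y) ∧ g₁ i m = 0) ∧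
                 (∃ m ∈ Set.Icc (-1:ℝ) 1, (∀ y, g₂ i m ≤ g₂ i y) ∧ g₂ i m = 0))
    (x₁ x₂ : Fin n → ℝ)
    (hmin₁ : ∀ y : Fin n → ℝ, ∑ i, y i = b →
      ∑ i, g₁ i (x₁ i) ≤ ∑ i, g₁ i (y i))
    (hmin₂ : ∀ y : Fin n → ℝ, ∑ i, y i = b →
      ∑ i, g₂ i (x₂ i) ≤ ∑ i, g₂ i (y i)) :
    ∑ i, (x₂ i - x₁ i) ^ 2 ≤
      4 * n * (β / α) * (1 + 1 / Real.sqrt (β / α) + |b| / n) ^ 2 := by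
  have hn' : (0 : ℝ) < n := by exact_mod_cast hn
  choose m₁ hm₁ hmin_m₁ using fun i => (hloc i).1
  choose m₂ hm₂ hmin_m₂ using fun i => (hloc i).2
  have hbalanced : ∑ _i : Fin n, b / n = b := by simp [field]
  have hbn : |b / n| = |b| / n := by rw [abs_div, Nat.abs_cast]
  have hx₁ := sum_sq_sub_le_of_sum_le hα (fun i x => (hdiff i x).1) (fun i => (hconv i).1)
    (fun i x y => (hsmooth i x y).1) (fun i => isMinOn_univ_iff.mpr (hmin_m₁ i).1)
    (hmin₁ _ hbalanced)
  have hx₂ := sum_sq_sub_le_of_sum_le hα (fun i x => (hdiff i x).2) (fun i => (hconv i).2)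
    (fun i x y => (hsmooth i x y).2) (fun i => isMinOn_univ_iff.mpr (hmin_m₂ i).1)
    (hmin₂ _ hbalanced)
  have hκ : 0 < β / α := div_pos (hα.trans_le hαβ) hα
  have hspread : ∀ m : Fin n → ℝ, (∀ i, m i ∈ Set.Icc (-1 : ℝ) 1) →
      β / α * ∑ i, (b / n - m i) ^ 2 ≤ β / α * (n * (1 + |b| / n) ^ 2) := fun m hm => by
    simpa [hbn] using mul_le_mul_of_nonneg_left (sum_sq_sub_le_card_mul hm (b / n)) hκ.le
  have hshift := sum_sq_sub_le_of_sum_sq_sub_le (hx₁.trans (hspread m₁ hm₁))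
    (hx₂.trans (hspread m₂ hm₂)) (sum_sq_le_card hm₁) (sum_sq_le_card hm₂)
  rwa [Fintype.card_fin, two_mul_sqrt_add_two_mul_sqrt_sq hκ hn'.le (by positivity)] at hshift

/-- If one local function is replaced, the two constrained minimizers satisfy
`‖x⁽²⁾ − x⁽¹⁾‖² ≤ 4nκ(1 + 1/√κ + |b|/n)²`, where `κ = β/α`. -/
theorem minimizer_shift_bound (n : ℕ) (hn : 1 ≤ n) (α β b : ℝ)
    (hα : 0 < α) (hαβ : α ≤ β) (i₀ : Fin n)
    (g₁ g₂ : Fin n → ℝ → ℝ)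
    (hsame : ∀ i, i ≠ i₀ → g₁ i = g₂ i)
    (hdiff : ∀ i x, DifferentiableAt ℝ (g₁ i) x ∧ DifferentiableAt ℝ (g₂ i) x)
    (hconv : ∀ i, ConvexOn ℝ Set.univ (fun x => g₁ i x - α / 2 * x ^ 2) ∧
                  ConvexOn ℝ Set.univ (fun x => g₂ i x - α / 2 * x ^ 2))
    (hsmooth : ∀ i x y, |deriv (g₁ i) x - deriv (g₁ i) y| ≤ β * |x - y| ∧
                        |deriv (g₂ i) x - deriv (g₂ i) y| ≤ β * |x - y|)
    (hloc : ∀ i, (∃ m ∈ Set.Icc (-1:ℝ) 1, (∀ y, g₁ i m ≤ g₁ i y) ∧ g₁ i m = 0) ∧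
                 (∃ m ∈ Set.Icc (-1:ℝ) 1, (∀ y, g₂ i m ≤ g₂ i y) ∧ g₂ i m = 0))
    (x₁ x₂ : Fin n → ℝ)
    (hfeas₁ : ∑ i, x₁ i = b) (hfeas₂ : ∑ i, x₂ i = b)
    (hmin₁ : ∀ y : Fin n → ℝ, ∑ i, y i = b →
      ∑ i, g₁ i (x₁ i) ≤ ∑ i, g₁ i (y i))
    (hmin₂ : ∀ y : Fin n → ℝ, ∑ i, y i = b →
      ∑ i, g₂ i (x₂ i) ≤ ∑ i, g₂ i (y i)) :
    ∑ i, (x₂ i - x₁ i) ^ 2 ≤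
      4 * n * (β / α) * (1 + 1 / Real.sqrt (β / α) + |b| / n) ^ 2 :=
  minimizer_shift_bound_general n hn α β b hα hαβ g₁ g₂ hdiff hconv hsmooth hloc x₁ x₂ hmin₁ hmin₂
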